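/- arXiv:1707.09115 — 3 statements merged into one kernel-verified Lean document; each statement's English description precedes it below -/
import Mathlib

section
/- Let n ≥ 5, let p > 3 be a prime, and suppose v_p(n) = a with a ≥ 1. Then the Sylow p-subgroup of the critical group K(KG(n,2)) is isomorphic to (ℤ/p^aℤ)^{n−2}; equivalently, the p-elementary divisor multiplicities of the Laplacian L of KG(n,2) are e_a = f−1 = n−2, e_0 = g+1 = n(n−3)/2 + 1, and e_i = 0 for all other i ≥ 1, where e_i denotes the multiplicity of p^i among the Smith normal form entries of L. -/
/-- Vertices of the Kneser graph `KG(n,2)`: the 2-element subsets of an `n`-element set. -/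
abbrev KneserVertex (n : ℕ) := {s : Finset (Fin n) // s.card = 2}

/-- The Kneser graph `KG(n,2)`: 2-subsets are adjacent iff they are disjoint. -/
def kneserGraph2 (n : ℕ) : SimpleGraph (KneserVertex n) where
  Adj u v := Disjoint u.1 v.1
  symm := ⟨fun _ _ h => h.symm⟩
  loopless := ⟨fun u h => by
    simp only [disjoint_self, Finset.bot_eq_empty] at h
    have hu := u.2
    rw [h] at hu
    simp at hu⟩

instance (n : ℕ) : DecidableRel (kneserGraph2 n).Adj :=
  fun u v => inferInstanceAs (Decidable (Disjoint u.1 v.1))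

/-- The Laplacian matrix of `KG(n,2)` over the integers. -/
noncomputable def kneserLaplacian (n : ℕ) : Matrix (KneserVertex n) (KneserVertex n) ℤ :=
  SimpleGraph.lapMatrix ℤ (kneserGraph2 n)

/-- The cokernel `ℤ^V / im L` of the Laplacian of `KG(n,2)`. -/
noncomputable abbrev KneserCokernel (n : ℕ) :=
  (KneserVertex n → ℤ) ⧸ LinearMap.range (Matrix.mulVecLin (kneserLaplacian n))

/-- The critical group of `KG(n,2)`: the torsion subgroup of the cokernel of the Laplacian. -/
noncomputable def criticalGroup (n : ℕ) : AddSubgroup (KneserCokernel n) :=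
  AddCommGroup.torsion (KneserCokernel n)


/-!
Let `B` be the vertex–point incidence matrix of `KG(n,2)`, `λ = n(n-3)/2` and
`μ = (n-1)(n-4)/2`. Then `L = μ I + B Bᵀ - J` and `Bᵀ B = (n-2) I + J`, so on sum-zero vectors
`L` acts as `λ` on the image of `B` and `L² - (λ + μ) L + λ μ = 0`; as torsion classes have
sum-zero representatives, the critical group is killed by `λ μ`. As `p ∤ μ` and `v_p(λ) = a`,
its `p`-part is the `p^a`-torsion of `ℤ^V / im L`.

The map `v ↦ ((Bᵀv)_i - (Bᵀv)_{n-1})_{i < n-2} mod p^a` kills `im L`, because `Bᵀ L = λ Bᵀ`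
modulo constants. It is onto on the `p^a`-torsion: for sum-zero `x`, the class of `(λ/p^a) B x`
is `p^a`-torsion and goes to `(λ/p^a)(n-2)` times the differences of `x`. It is injective there:
for `v` in its kernel, `μ v ≡ -B Bᵀ v (mod im L)` and `Bᵀ v ≡ c (𝟙 - n e_{n-2}) (mod p^a)`, and
both `B (𝟙 - n e_{n-2})` and `p^a B y` (for sum-zero `y`) are killed modulo `im L` by
`(n-3) λ/p^a`, which is prime to `p`.
-/

open Finset Matrix

theorem SimpleGraph.sum_lapMatrix_mulVec {V R : Type*} [Fintype V] [DecidableEq V] [CommRing R]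
    (G : SimpleGraph V) [DecidableRel G.Adj] (v : V → R) :
    ∑ i, (G.lapMatrix R *ᵥ v) i = 0 := by
  calc ∑ i, (G.lapMatrix R *ᵥ v) i = (fun _ => 1) ⬝ᵥ (G.lapMatrix R *ᵥ v) := by
        simp [dotProduct]
    _ = (G.lapMatrix R *ᵥ fun _ => 1) ⬝ᵥ v := by
        rw [dotProduct_mulVec, ← mulVec_transpose, (G.isSymm_lapMatrix (R := R)).eq]
    _ = 0 := by rw [G.lapMatrix_mulVec_const_eq_zero, zero_dotProduct]

theorem Matrix.of_const_one_mulVec {ι κ R : Type*} [Fintype κ] [NonAssocSemiring R] (v : κ → R) :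
    (of fun (_ : ι) (_ : κ) => (1 : R)) *ᵥ v = fun _ => ∑ j, v j := by
  ext
  simp [mulVec, dotProduct]

theorem IsCoprime.eq_zero_of_smul_eq_zero {R M : Type*} [CommSemiring R] [AddCommMonoid M]
    [Module R M] {a b : R} (hab : IsCoprime a b) {x : M} (ha : a • x = 0) (hb : b • x = 0) :
    x = 0 := by
  obtain ⟨α, β, h⟩ := hab
  rw [← one_smul R x, ← h, add_smul, mul_smul, mul_smul, ha, hb, smul_zero, smul_zero, add_zero]

noncomputable def primaryComponentEquivTorsionBy {M : Type*} [AddCommGroup M] {p : ℕ}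
    [Fact p.Prime] (a : ℕ) {r : ℤ} (hr : IsCoprime (p : ℤ) r)
    (hkill : ∀ x : M, IsOfFinAddOrder x → (((p ^ a : ℕ) : ℤ) * r) • x = 0) :
    AddCommGroup.primaryComponent (AddCommGroup.torsion M) p ≃+
      Submodule.torsionBy ℤ M ((p ^ a : ℕ) : ℤ) where
  toFun t := ⟨t.1.1, by
    obtain ⟨k, hk⟩ := t.2
    have hk : ((p : ℤ) ^ k) • t.1.1 = 0 := by
      rw [← Nat.cast_pow, natCast_zsmul]
      exact congrArg Subtype.val hk
    refine (Submodule.mem_torsionBy_iff _ _).mpr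
      ((hr.pow_left (m := k)).eq_zero_of_smul_eq_zero ?_ ?_)
    · rw [smul_comm, hk, smul_zero]
    · rw [smul_smul, mul_comm, hkill _ t.1.2]⟩
  invFun x :=
    have hx : p ^ a • x.1 = 0 := by
      rw [← natCast_zsmul]
      exact (Submodule.mem_torsionBy_iff _ _).mp x.2
    ⟨⟨x.1, isOfFinAddOrder_iff_nsmul_eq_zero.mpr ⟨p ^ a, pow_pos (Fact.out : p.Prime).pos a, hx⟩⟩,
      ⟨a, Subtype.ext hx⟩⟩
  left_inv _ := rfl
  right_inv _ := rfl
  map_add' _ _ := rfl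

namespace Kneser

variable {n : ℕ}

def incidence (n : ℕ) : Matrix (KneserVertex n) (Fin n) ℤ :=
  of fun s i => if i ∈ s.1 then 1 else 0

def lam (n : ℕ) : ℤ := n * (n - 3) / 2

def mu (n : ℕ) : ℤ := (n - 1) * (n - 4) / 2

theorem two_mul_lam (n : ℕ) : 2 * lam n = n * (n - 3) := by
  refine Int.mul_ediv_cancel' ?_
  rcases Int.even_or_odd (n : ℤ) with ⟨k, hk⟩ | ⟨k, hk⟩
  · exact ⟨k * (n - 3), by rw [hk]; ring⟩
  · exact ⟨n * (k - 1), by rw [hk]; ring⟩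

theorem two_mul_mu (n : ℕ) : 2 * mu n = (n - 1) * (n - 4) := by
  refine Int.mul_ediv_cancel' ?_
  rcases Int.even_or_odd (n : ℤ) with ⟨k, hk⟩ | ⟨k, hk⟩
  · exact ⟨(n - 1) * (k - 2), by rw [hk]; ring⟩
  · exact ⟨k * (n - 4), by rw [hk]; ring⟩

theorem lam_eq_mu_add (n : ℕ) : lam n = mu n + (n - 2) := by
  linarith [two_mul_lam n, two_mul_mu n]

theorem incidence_mul_transpose_apply (s t : KneserVertex n) :
    (incidence n * (incidence n)ᵀ) s t = #(s.1 ∩ t.1) := by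
  simp [incidence, mul_apply, Finset.inter_comm]

theorem card_inter_of_ne {s t : KneserVertex n} (hst : s ≠ t) :
    #(s.1 ∩ t.1) = if Disjoint s.1 t.1 then 0 else 1 := by
  split_ifs with hdisj
  · exact card_eq_zero.mpr (disjoint_iff_inter_eq_empty.mp hdisj)
  · have hpos : 0 < #(s.1 ∩ t.1) := card_pos.mpr (not_disjoint_iff_nonempty_inter.mp hdisj)
    have hne : #(s.1 ∩ t.1) ≠ 2 := fun h2 => hst <| Subtype.ext <|
      (eq_of_subset_of_card_le inter_subset_left (by rw [h2, s.2])).symm.trans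
        (eq_of_subset_of_card_le inter_subset_right (by rw [h2, t.2]))
    have hle : #(s.1 ∩ t.1) ≤ 2 := (card_le_card inter_subset_left).trans s.2.le
    omega

theorem degree_eq (s : KneserVertex n) : (kneserGraph2 n).degree s = (n - 2).choose 2 := by
  have : (kneserGraph2 n).neighborFinset s = (powersetCard 2 s.1ᶜ).subtype (#· = 2) := by
    ext t
    rw [SimpleGraph.mem_neighborFinset]
    simp [kneserGraph2, t.2, subset_compl_iff_disjoint_left]
  rw [← SimpleGraph.card_neighborFinset_eq_degree, this, card_subtype,
    filter_true_of_mem (fun t ht => (mem_powersetCard.mp ht).2), card_powersetCard,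
    card_compl, s.2, Fintype.card_fin]

theorem degree_eq_mu_add_one (s : KneserVertex n) :
    ((kneserGraph2 n).degree s : ℤ) = mu n + 1 := by
  have hn : 2 ≤ n := s.2 ▸ (card_le_univ s.1).trans_eq (Fintype.card_fin n)
  have h : ((kneserGraph2 n).degree s : ℚ) = ((n - 2 : ℕ) : ℚ) * ((n - 2 : ℕ) - 1) / 2 :=
    degree_eq s ▸ Nat.cast_choose_two ℚ (n - 2)
  have : ((2 * (kneserGraph2 n).degree s : ℤ) : ℚ) = (((n - 2) * (n - 3) : ℤ) : ℚ) := by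
    push_cast [h, Nat.cast_sub hn]
    ring
  replace this := Int.cast_injective this
  linarith [two_mul_mu n]

theorem kneserLaplacian_eq :
    kneserLaplacian n = mu n • 1 + incidence n * (incidence n)ᵀ - of fun _ _ => 1 := by
  ext s t
  rw [Matrix.sub_apply, Matrix.add_apply, incidence_mul_transpose_apply, kneserLaplacian,
    SimpleGraph.lapMatrix, Matrix.sub_apply, SimpleGraph.degMatrix, SimpleGraph.adjMatrix_apply]
  by_cases hst : s = t
  · subst hst
    simp only [degree_eq_mu_add_one, diagonal_apply_eq, SimpleGraph.irrefl, ↓reduceIte, sub_zero,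
      Matrix.smul_apply, one_apply_eq, smul_eq_mul, mul_one, inter_self, s.2, Nat.cast_ofNat,
      of_apply]
    ring
  · rw [card_inter_of_ne hst]
    by_cases h : Disjoint s.1 t.1 <;> simp [hst, kneserGraph2, h]

theorem sum_incidence_row (s : KneserVertex n) : ∑ i, incidence n s i = 2 := by
  simp [incidence, s.2]

theorem transpose_mul_incidence_apply_self (i : Fin n) :
    ((incidence n)ᵀ * incidence n) i i = ∑ s, incidence n s i := by
  refine mul_apply.trans (sum_congr rfl fun s _ => ?_)
  simp only [transpose_apply, incidence, of_apply]
  split_ifs <;> simp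

theorem transpose_mul_incidence_apply_of_ne {i j : Fin n} (hij : i ≠ j) :
    ((incidence n)ᵀ * incidence n) i j = 1 := by
  have hpair : #({i, j} : Finset (Fin n)) = 2 := card_pair hij
  simp only [mul_apply, transpose_apply, incidence, of_apply, ite_mul, one_mul, zero_mul,
    ← ite_and]
  rw [sum_boole, Nat.cast_eq_one, card_eq_one]
  refine ⟨⟨{i, j}, hpair⟩, ?_⟩
  ext s
  simp only [mem_filter, mem_univ, true_and, mem_singleton, Subtype.ext_iff]
  refine ⟨fun ⟨hi, hj⟩ => (eq_of_subset_of_card_le ?_ (by rw [s.2, hpair])).symm, ?_⟩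
  · exact insert_subset_iff.mpr ⟨hi, singleton_subset_iff.mpr hj⟩
  · rintro h
    simp [h]

theorem sum_incidence_col (i : Fin n) : ∑ s, incidence n s i = n - 1 := by
  -- row `i` of the Gram matrix sums to twice its diagonal entry, and its off-diagonal entries are 1
  have hrow : ∑ j, ((incidence n)ᵀ * incidence n) i j = 2 * ∑ s, incidence n s i := by
    simp only [mul_apply, transpose_apply]
    rw [sum_comm]
    simp_rw [← mul_sum, sum_incidence_row, mul_sum, mul_comm]
  rw [← add_sum_erase _ _ (mem_univ i), sum_congr rfl fun j hj =>
    transpose_mul_incidence_apply_of_ne (ne_of_mem_erase hj).symm,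
    transpose_mul_incidence_apply_self] at hrow
  simp only [sum_const, mem_univ, card_erase_of_mem, card_univ, Fintype.card_fin, nsmul_eq_mul,
    Nat.cast_sub i.pos, Nat.cast_one, mul_one] at hrow
  linarith

theorem transpose_mul_incidence :
    (incidence n)ᵀ * incidence n = (n - 2 : ℤ) • (1 : Matrix (Fin n) (Fin n) ℤ) +
      of fun _ _ => 1 := by
  ext i j
  rw [Matrix.add_apply, Matrix.smul_apply, of_apply, smul_eq_mul]
  rcases eq_or_ne i j with rfl | hij
  · rw [one_apply_eq, transpose_mul_incidence_apply_self, sum_incidence_col]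
    ring
  · rw [one_apply_ne hij, transpose_mul_incidence_apply_of_ne hij]
    ring

theorem sum_incidence_mulVec (x : Fin n → ℤ) :
    ∑ s, (incidence n *ᵥ x) s = (n - 1) * ∑ i, x i := by
  simp only [mulVec, dotProduct]
  rw [sum_comm, mul_sum]
  simp_rw [← sum_mul, sum_incidence_col]

theorem sum_transpose_incidence_mulVec (v : KneserVertex n → ℤ) :
    ∑ i, ((incidence n)ᵀ *ᵥ v) i = 2 * ∑ s, v s := by
  simp only [mulVec, dotProduct, transpose_apply]
  rw [sum_comm, mul_sum]
  simp_rw [← sum_mul, sum_incidence_row]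

theorem incidence_mulVec_const (c : ℤ) : incidence n *ᵥ (fun _ => c) = fun _ => 2 * c := by
  ext s
  simp [mulVec, dotProduct, ← sum_mul, sum_incidence_row]

theorem transpose_incidence_mulVec_const (c : ℤ) :
    (incidence n)ᵀ *ᵥ (fun _ => c) = fun _ => (n - 1) * c := by
  ext i
  simp [mulVec, dotProduct, ← sum_mul, sum_incidence_col]

theorem transpose_incidence_mulVec_incidence_mulVec (x : Fin n → ℤ) :
    (incidence n)ᵀ *ᵥ (incidence n *ᵥ x) = (n - 2 : ℤ) • x + fun _ => ∑ i, x i := by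
  rw [mulVec_mulVec, transpose_mul_incidence, add_mulVec, smul_mulVec, one_mulVec,
    of_const_one_mulVec]

theorem kneserLaplacian_mulVec (v : KneserVertex n → ℤ) :
    kneserLaplacian n *ᵥ v =
      mu n • v + incidence n *ᵥ ((incidence n)ᵀ *ᵥ v) - fun _ => ∑ s, v s := by
  rw [kneserLaplacian_eq, sub_mulVec, add_mulVec, smul_mulVec, one_mulVec, mulVec_mulVec,
    of_const_one_mulVec]

theorem kneserLaplacian_mulVec_incidence_mulVec (x : Fin n → ℤ) :
    kneserLaplacian n *ᵥ (incidence n *ᵥ x) =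
      lam n • incidence n *ᵥ x - fun _ => (n - 3) * ∑ i, x i := by
  rw [kneserLaplacian_mulVec, transpose_incidence_mulVec_incidence_mulVec, mulVec_add,
    mulVec_smul, incidence_mulVec_const, sum_incidence_mulVec, lam_eq_mu_add]
  ext s
  simp only [Pi.add_apply, Pi.sub_apply, Pi.smul_apply, smul_eq_mul]
  ring

theorem transpose_incidence_mulVec_kneserLaplacian_mulVec (v : KneserVertex n → ℤ) :
    (incidence n)ᵀ *ᵥ (kneserLaplacian n *ᵥ v) =
      lam n • (incidence n)ᵀ *ᵥ v - fun _ => (n - 3) * ∑ s, v s := by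
  rw [kneserLaplacian_mulVec, mulVec_sub, mulVec_add, mulVec_smul,
    transpose_incidence_mulVec_incidence_mulVec, transpose_incidence_mulVec_const,
    sum_transpose_incidence_mulVec, lam_eq_mu_add]
  ext i
  simp only [Pi.add_apply, Pi.sub_apply, Pi.smul_apply, smul_eq_mul]
  ring

noncomputable abbrev cokernelMk (n : ℕ) : (KneserVertex n → ℤ) →ₗ[ℤ] KneserCokernel n :=
  Submodule.mkQ _

theorem cokernelMk_kneserLaplacian_mulVec (z : KneserVertex n → ℤ) :
    cokernelMk n (kneserLaplacian n *ᵥ z) = 0 :=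
  (Submodule.Quotient.mk_eq_zero _).mpr ⟨z, rfl⟩

theorem sum_eq_zero_of_zsmul_cokernelMk_eq_zero {k : ℤ} (hk : k ≠ 0) {v : KneserVertex n → ℤ}
    (h : k • cokernelMk n v = 0) : ∑ s, v s = 0 := by
  rw [← map_zsmul, Submodule.mkQ_apply, Submodule.Quotient.mk_eq_zero] at h
  obtain ⟨z, hz⟩ := h
  have := SimpleGraph.sum_lapMatrix_mulVec (kneserGraph2 n) z
  rw [← kneserLaplacian, ← mulVecLin_apply, hz] at this
  simpa [← mul_sum, hk] using this

theorem lam_smul_cokernelMk_incidence_mulVec {x : Fin n → ℤ} (hx : ∑ i, x i = 0) :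
    lam n • cokernelMk n (incidence n *ᵥ x) = 0 := by
  rw [← map_zsmul, ← cokernelMk_kneserLaplacian_mulVec (incidence n *ᵥ x),
    kneserLaplacian_mulVec_incidence_mulVec, hx, mul_zero, ← Pi.zero_def, sub_zero]

theorem sub_three_smul_cokernelMk_incidence_mulVec (j : Fin n) :
    ((n : ℤ) - 3) • cokernelMk n (incidence n *ᵥ ((fun _ => 1) - (n : ℤ) • Pi.single j 1)) =
      0 := by
  rw [← map_zsmul, ← cokernelMk_kneserLaplacian_mulVec ((-2 : ℤ) • incidence n *ᵥ Pi.single j 1),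
    mulVec_smul, kneserLaplacian_mulVec_incidence_mulVec, mulVec_sub, mulVec_smul,
    incidence_mulVec_const]
  congr 1
  ext s
  simp only [Pi.smul_apply, Pi.sub_apply, smul_eq_mul, sum_pi_single', mem_univ, if_true]
  linear_combination (incidence n *ᵥ Pi.single j 1) s * two_mul_lam n

theorem lam_mul_mu_smul_eq_zero {x : KneserCokernel n} (hx : IsOfFinAddOrder x) :
    (lam n * mu n) • x = 0 := by
  obtain ⟨v, rfl⟩ := Submodule.mkQ_surjective _ x
  obtain ⟨k, hk, hkv⟩ := isOfFinAddOrder_iff_nsmul_eq_zero.mp hx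
  have hv : ∑ s, v s = 0 :=
    sum_eq_zero_of_zsmul_cokernelMk_eq_zero (Int.natCast_ne_zero.mpr hk.ne') (by simpa using hkv)
  have hw : ∑ i, ((incidence n)ᵀ *ᵥ v) i = 0 := by
    rw [sum_transpose_incidence_mulVec, hv, mul_zero]
  have hLv : kneserLaplacian n *ᵥ v = mu n • v + incidence n *ᵥ ((incidence n)ᵀ *ᵥ v) := by
    rw [kneserLaplacian_mulVec, hv, ← Pi.zero_def, sub_zero]
  have hLw := kneserLaplacian_mulVec_incidence_mulVec ((incidence n)ᵀ *ᵥ v)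
  rw [hw, mul_zero, ← Pi.zero_def, sub_zero] at hLw
  rw [← map_zsmul,
    ← cokernelMk_kneserLaplacian_mulVec ((lam n + mu n) • v - kneserLaplacian n *ᵥ v),
    mulVec_sub, mulVec_smul, hLv, mulVec_add, mulVec_smul, hLv, hLw]
  congr 1
  module

section Coordinates

variable {m N : ℕ}

def diffLast (N m : ℕ) : (Fin (m + 2) → ℤ) →+ (Fin m → ZMod N) where
  toFun w i := ((w i.castSucc.castSucc - w (Fin.last _) : ℤ) : ZMod N)
  map_zero' := by ext; simp
  map_add' w w' := by ext; push_cast [Pi.add_apply]; ring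

theorem diffLast_const (c : ℤ) : diffLast N m (fun _ => c) = 0 := by
  ext
  simp [diffLast]

theorem exists_sum_eq_zero_diffLast_eq (t : Fin m → ZMod N) :
    ∃ x : Fin (m + 2) → ℤ, ∑ j, x j = 0 ∧ diffLast N m x = t := by
  let y : Fin m → ℤ := fun i => ((t i).cast : ℤ)
  refine ⟨Fin.snoc (Fin.snoc y (-∑ i, y i)) 0, ?_, ?_⟩
  · simp
  · ext i
    simp [diffLast, y]

theorem exists_eq_smul_add_smul_of_diffLast_eq_zero [NeZero N] {w : Fin (m + 2) → ℤ}
    (hw : ∑ j, w j = 0) (hd : diffLast N m w = 0) :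
    ∃ y : Fin (m + 2) → ℤ, ∑ j, y j = 0 ∧
      w = w (Fin.last _) • ((fun _ => 1) - ((m + 2 : ℕ) : ℤ) • Pi.single (Fin.last m).castSucc 1)
        + (N : ℤ) • y := by
  set h : Fin (m + 2) → ℤ :=
    (fun _ => 1) - ((m + 2 : ℕ) : ℤ) • Pi.single (Fin.last m).castSucc 1
  have hlo (i : Fin m) : (N : ℤ) ∣ w i.castSucc.castSucc - w (Fin.last _) :=
    (ZMod.intCast_zmod_eq_zero_iff_dvd _ _).mp (congrFun hd i)
  have hdvd : ∀ j, (N : ℤ) ∣ w j - w (Fin.last _) * h j := by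
    refine Fin.lastCases (by simp [h]) (Fin.lastCases ?_ fun i => by simpa [h] using hlo i)
    rw [Fin.sum_univ_castSucc, Fin.sum_univ_castSucc] at hw
    have : w (Fin.last m).castSucc - w (Fin.last _) * h (Fin.last m).castSucc =
        -∑ i : Fin m, (w i.castSucc.castSucc - w (Fin.last _)) := by
      simp only [h, Pi.sub_apply, Pi.smul_apply, Pi.single_eq_same, smul_eq_mul, mul_one,
        sum_sub_distrib, sum_const, card_univ, Fintype.card_fin, nsmul_eq_mul]
      push_cast
      linear_combination hw
    rw [this]
    exact (dvd_sum fun i _ => hlo i).neg_right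
  choose y hy using hdvd
  refine ⟨y, ?_, ?_⟩
  · have hh : ∑ j, h j = 0 := by simp [h, sum_sub_distrib, ← mul_sum]
    have : (N : ℤ) * ∑ j, y j = 0 := by
      rw [mul_sum, ← sum_congr rfl fun j _ => hy j, sum_sub_distrib, ← mul_sum, hw, hh,
        mul_zero, sub_zero]
    exact (mul_eq_zero.mp this).resolve_left (Int.natCast_ne_zero.mpr (NeZero.ne N))
  · ext j
    simp only [Pi.add_apply, Pi.smul_apply, smul_eq_mul]
    linear_combination hy j

end Coordinates

section Modulus

variable {m N : ℕ} {u : ℤ}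

noncomputable def cokernelDiffLast (hN : (N : ℤ) ∣ lam (m + 2)) :
    KneserCokernel (m + 2) →ₗ[ℤ] (Fin m → ZMod N) :=
  Submodule.liftQ _ ((diffLast N m).toIntLinearMap ∘ₗ (incidence (m + 2))ᵀ.mulVecLin) <| by
    rintro _ ⟨z, rfl⟩
    obtain ⟨k, hk⟩ := hN
    rw [LinearMap.mem_ker, LinearMap.comp_apply, mulVecLin_apply, mulVecLin_apply,
      AddMonoidHom.coe_toIntLinearMap, transpose_incidence_mulVec_kneserLaplacian_mulVec,
      map_sub, diffLast_const, sub_zero, map_zsmul, hk]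
    ext i
    simp

theorem cokernelDiffLast_cokernelMk (hN : (N : ℤ) ∣ lam (m + 2)) (v : KneserVertex (m + 2) → ℤ) :
    cokernelDiffLast hN (cokernelMk _ v) = diffLast N m ((incidence (m + 2))ᵀ *ᵥ v) :=
  rfl

theorem eq_zero_of_cokernelDiffLast_eq_zero [NeZero N] (hlam : lam (m + 2) = N * u)
    (hu : IsCoprime (N : ℤ) u) (hmu : IsCoprime (N : ℤ) (mu (m + 2)))
    (h3 : IsCoprime (N : ℤ) ((m + 2 : ℕ) - 3)) {x : KneserCokernel (m + 2)}
    (hx : (N : ℤ) • x = 0) (hψ : cokernelDiffLast ⟨u, hlam⟩ x = 0) : x = 0 := by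
  obtain ⟨v, rfl⟩ := Submodule.mkQ_surjective _ x
  set w := (incidence (m + 2))ᵀ *ᵥ v
  have hv : ∑ s, v s = 0 :=
    sum_eq_zero_of_zsmul_cokernelMk_eq_zero (Int.natCast_ne_zero.mpr (NeZero.ne N)) hx
  have hw : ∑ j, w j = 0 := by rw [sum_transpose_incidence_mulVec, hv, mul_zero]
  obtain ⟨y, hy, hwy⟩ := exists_eq_smul_add_smul_of_diffLast_eq_zero hw hψ
  have hmu_v : mu (m + 2) • cokernelMk _ v = -cokernelMk _ (incidence _ *ᵥ w) := by
    rw [← map_zsmul, ← map_neg, ← sub_eq_zero, ← map_sub, sub_neg_eq_add]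
    convert cokernelMk_kneserLaplacian_mulVec v using 2
    rw [kneserLaplacian_mulVec, hv, ← Pi.zero_def, sub_zero]
  have hBw : (((m + 2 : ℕ) - 3 : ℤ) * u) • cokernelMk _ (incidence _ *ᵥ w) = 0 := by
    have hh := sub_three_smul_cokernelMk_incidence_mulVec (n := m + 2) (Fin.last m).castSucc
    have hBy := lam_smul_cokernelMk_incidence_mulVec hy
    rw [hlam] at hBy
    rw [hwy, mulVec_add, mulVec_smul, mulVec_smul, map_add, map_zsmul, map_zsmul]
    linear_combination (norm := module) (w (Fin.last _) * u) • hh + ((m + 2 : ℕ) - 3 : ℤ) • hBy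
  have hkill : (((m + 2 : ℕ) - 3 : ℤ) * u * mu (m + 2)) • cokernelMk _ v = 0 := by
    rw [mul_smul, hmu_v, smul_neg, hBw, neg_zero]
  exact ((h3.mul_right hu).mul_right hmu).eq_zero_of_smul_eq_zero hx hkill

theorem exists_cokernelDiffLast_eq (hlam : lam (m + 2) = N * u)
    (hu : IsCoprime (N : ℤ) (u * ((m + 2 : ℕ) - 2))) (c : Fin m → ZMod N) :
    ∃ x : KneserCokernel (m + 2), (N : ℤ) • x = 0 ∧ cokernelDiffLast ⟨u, hlam⟩ x = c := by
  obtain ⟨X, hX, hXc⟩ := exists_sum_eq_zero_diffLast_eq (N := N)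
    (((u * ((m + 2 : ℕ) - 2) : ℤ) : ZMod N)⁻¹ • c)
  refine ⟨u • cokernelMk _ (incidence _ *ᵥ X), ?_, ?_⟩
  · rw [smul_comm, ← mul_smul, mul_comm, ← hlam, lam_smul_cokernelMk_incidence_mulVec hX]
  · rw [map_zsmul, cokernelDiffLast_cokernelMk, transpose_incidence_mulVec_incidence_mulVec,
      map_add, diffLast_const, add_zero, map_zsmul, hXc, smul_smul]
    ext i
    simp only [Pi.smul_apply, zsmul_eq_mul, smul_eq_mul, ← mul_assoc]
    convert one_mul (c i)
    exact ZMod.coe_int_mul_inv_eq_one hu.symm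

noncomputable def torsionByEquiv [NeZero N] (hlam : lam (m + 2) = N * u)
    (hu : IsCoprime (N : ℤ) u) (hmu : IsCoprime (N : ℤ) (mu (m + 2)))
    (h2 : IsCoprime (N : ℤ) ((m + 2 : ℕ) - 2)) (h3 : IsCoprime (N : ℤ) ((m + 2 : ℕ) - 3)) :
    Submodule.torsionBy ℤ (KneserCokernel (m + 2)) (N : ℤ) ≃+ (Fin m → ZMod N) :=
  AddEquiv.ofBijective
    ((cokernelDiffLast ⟨u, hlam⟩).toAddMonoidHom.comp
      (Submodule.torsionBy ℤ _ _).subtype.toAddMonoidHom)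
    ⟨(injective_iff_map_eq_zero _).mpr fun x hx =>
      Subtype.ext (eq_zero_of_cokernelDiffLast_eq_zero hlam hu hmu h3 x.2 hx),
    fun c => by
      obtain ⟨x, hx, hxc⟩ := exists_cokernelDiffLast_eq hlam (hu.mul_right h2) c
      exact ⟨⟨x, hx⟩, hxc⟩⟩

end Modulus

section Arithmetic

variable {p : ℕ}

theorem isCoprime_sub_of_dvd (hp : p.Prime) {n k : ℤ} (hn : (p : ℤ) ∣ n) (hk : 0 < k)
    (hkp : k < p) : IsCoprime (p : ℤ) (n - k) := by
  refine (Nat.prime_iff_prime_int.mp hp).coprime_iff_not_dvd.mpr fun h => ?_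
  have := Int.le_of_dvd hk (by simpa using dvd_sub hn h)
  omega

theorem isCoprime_mu (hp : p.Prime) (hp4 : 4 < p) (hn : (p : ℤ) ∣ n) :
    IsCoprime (p : ℤ) (mu n) := by
  have : IsCoprime (p : ℤ) (2 * mu n) := by
    rw [two_mul_mu]
    exact (isCoprime_sub_of_dvd hp hn one_pos (by omega)).mul_right
      (isCoprime_sub_of_dvd hp hn (by norm_num) (by omega))
  exact this.of_mul_right_right

theorem exists_lam_eq_mul (hp : p.Prime) (hp4 : 4 < p) {a : ℕ} (hn : (p : ℤ) ∣ n)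
    (hdvd : p ^ a ∣ n) (hndvd : ¬ p ^ (a + 1) ∣ n) :
    ∃ u, lam n = ((p ^ a : ℕ) : ℤ) * u ∧ IsCoprime (p : ℤ) u := by
  obtain ⟨k, hk⟩ := hdvd
  have hpk : IsCoprime (p : ℤ) k := (Nat.prime_iff_prime_int.mp hp).coprime_iff_not_dvd.mpr
    fun h => hndvd (hk ▸ pow_succ p a ▸ mul_dvd_mul_left _ (Int.natCast_dvd_natCast.mp h))
  have hp2 : IsCoprime ((p ^ a : ℕ) : ℤ) 2 := Nat.isCoprime_iff_coprime.mpr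
    (((Nat.coprime_primes hp Nat.prime_two).mpr (by omega)).pow_left a)
  obtain ⟨u, hu⟩ : ((p ^ a : ℕ) : ℤ) ∣ lam n :=
    hp2.dvd_of_dvd_mul_left ⟨k * ((n : ℤ) - 3), by rw [two_mul_lam, hk]; push_cast; ring⟩
  have h2u : 2 * u = k * ((n : ℤ) - 3) := by
    refine mul_left_cancel₀ (pow_ne_zero a (Int.natCast_ne_zero.mpr hp.ne_zero)) ?_
    have hk' : (n : ℤ) = p ^ a * k := by exact_mod_cast hk
    push_cast at hu
    linear_combination (-2) * hu + two_mul_lam n + ((n : ℤ) - 3) * hk'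
  refine ⟨u, hu, ?_⟩
  have : IsCoprime (p : ℤ) (2 * u) := by
    rw [h2u]
    exact hpk.mul_right (isCoprime_sub_of_dvd hp hn (by norm_num) (by omega))
  exact this.of_mul_right_right

end Arithmetic

end Kneser

open Kneser in
theorem kneser_sylow_p_dvd_n (n p a : ℕ) [Fact p.Prime] (hn : 5 ≤ n) (hp : 3 < p)
    (ha : 1 ≤ a) (hdvd : p ^ a ∣ n) (hndvd : ¬ p ^ (a + 1) ∣ n) :
    Nonempty ((AddCommGroup.primaryComponent (criticalGroup n) p) ≃+
      (Fin (n - 2) → ZMod (p ^ a))) := by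
  have hprime : p.Prime := Fact.out
  have hp4 : 4 < p := lt_of_le_of_ne hp fun h => by subst h; norm_num at hprime
  have hpn : (p : ℤ) ∣ n := Int.natCast_dvd_natCast.mpr ((dvd_pow_self p (by omega)).trans hdvd)
  have hpow {x : ℤ} (hx : IsCoprime (p : ℤ) x) : IsCoprime ((p ^ a : ℕ) : ℤ) x := by
    rw [Nat.cast_pow]
    exact hx.pow_left
  have hmu := isCoprime_mu hprime hp4 hpn
  obtain ⟨u, hlam, hu⟩ := exists_lam_eq_mul hprime hp4 hpn hdvd hndvd
  have : NeZero (p ^ a) := ⟨pow_ne_zero a hprime.ne_zero⟩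
  obtain ⟨m, rfl⟩ : ∃ m, n = m + 2 := ⟨n - 2, by omega⟩
  refine ⟨(primaryComponentEquivTorsionBy a (hu.mul_right hmu) fun x hx => ?_).trans
    (torsionByEquiv hlam (hpow hu) (hpow hmu)
      (hpow (isCoprime_sub_of_dvd hprime hpn two_pos (by omega)))
      (hpow (isCoprime_sub_of_dvd hprime hpn three_pos (by omega))))⟩
  rw [← mul_assoc, ← hlam]
  exact lam_mul_mu_smul_eq_zero hx
end

section
/- Let n ≥ 5, let p > 3 be a prime, and suppose v_p(n−3) = a with a ≥ 1. Then the Sylow p-subgroup of the critical group K(KG(n,2)) is isomorphic to (ℤ/p^aℤ)^{n−1}; equivalently, the p-elementary divisor multiplicities of the Laplacian L of KG(n,2) are e_a = f = n−1, e_0 = g = n(n−3)/2, and e_i = 0 for all other i ≥ 1. -/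
/-!
Let `N` be the vertex–point incidence matrix of `KG(n,2)`, `C = 2Nᵀ - J` the signed
point–vertex incidence matrix, and `u = (n-1)(n-4)`. Counting how two 2-subsets meet gives
`2L = u + NC` and `u + CN = (n-3) L(Kₙ)`. For any integer matrices, multiplication by `N`
induces a map `coker(u + CN) → coker(u + NC)` whose kernel and cokernel are killed by `u`
(multiplication by `-C` is an inverse up to `u`). As `n ≡ 3 (mod p)` and `p > 3`, both `2` and `u`
are prime to `p`, so the `p`-part of `K(KG(n,2))` is that of `coker((n-3) L(Kₙ))`. Writing
`n - 3 = pᵃs` with `p ∤ sn`, the map sending `x ∈ ℤⁿ` to its last `n-1` coordinates modulo `pᵃ`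
and its coordinate sum identifies this cokernel, up to kernel and cokernel killed by `sn`, with
`(ℤ/pᵃ)ⁿ⁻¹ × ℤ`.
-/

open AddCommGroup Finset Matrix

section PrimaryComponent

variable {A B : Type*} [AddCommGroup A] [AddCommGroup B] {p : ℕ}

lemma eq_zero_of_zsmul_eq_zero_of_mem_primaryComponent {u : ℤ} (hu : IsCoprime u p) {a : A}
    (ha : a ∈ primaryComponent A p) (h : u • a = 0) : a = 0 := by
  obtain ⟨k, hk⟩ := ha
  obtain ⟨x, y, hxy⟩ := hu.pow_right (n := k)
  have hk' : ((p : ℤ) ^ k) • a = 0 := by exact_mod_cast hk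
  calc a = (x * u + y * (p : ℤ) ^ k) • a := by rw [hxy, one_smul]
    _ = 0 := by rw [add_smul, mul_smul, mul_smul, h, hk', smul_zero, smul_zero, add_zero]

lemma exists_mem_primaryComponent_zsmul_eq {u : ℤ} (hu : IsCoprime u p) {a : A}
    (ha : a ∈ primaryComponent A p) : ∃ b ∈ primaryComponent A p, u • b = a := by
  obtain ⟨k, hk⟩ := id ha
  obtain ⟨x, y, hxy⟩ := hu.pow_right (n := k)
  have hk' : ((p : ℤ) ^ k) • a = 0 := by exact_mod_cast hk
  refine ⟨x • a, zsmul_mem ha x, ?_⟩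
  calc u • x • a = (x * u + y * (p : ℤ) ^ k) • a := by
        rw [add_smul, mul_smul y, hk', smul_zero, add_zero, smul_smul, mul_comm]
    _ = a := by rw [hxy, one_smul]

lemma map_mem_primaryComponent (ψ : A →+ B) {a : A} (ha : a ∈ primaryComponent A p) :
    ψ a ∈ primaryComponent B p := by
  obtain ⟨k, hk⟩ := ha
  exact ⟨k, by rw [← map_nsmul, hk, map_zero]⟩

theorem nonempty_primaryComponent_addEquiv_of_isCoprime (ψ : A →+ B) {u : ℤ}
    (hu : IsCoprime u p) (hker : ∀ a, ψ a = 0 → u • a = 0)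
    (hcoker : ∀ b ∈ primaryComponent B p, ∃ a, ψ a = u • b) :
    Nonempty (primaryComponent A p ≃+ primaryComponent B p) := by
  let f : primaryComponent A p →+ primaryComponent B p :=
    AddMonoidHom.restrict (f := ψ) fun _ ↦ map_mem_primaryComponent ψ
  refine ⟨AddEquiv.ofBijective f ⟨(injective_iff_map_eq_zero f).2 ?_, ?_⟩⟩
  · rintro ⟨a, ha⟩ hfa
    exact Subtype.ext <| eq_zero_of_zsmul_eq_zero_of_mem_primaryComponent hu ha <|
      hker a (congrArg Subtype.val hfa)
  · rintro ⟨b, hb⟩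
    -- `b = u² • b'`; a preimage `a` of `u • b'` need not be primary, but `u • a` is.
    obtain ⟨b', ⟨k, hk⟩, rfl⟩ := exists_mem_primaryComponent_zsmul_eq (hu.mul_left hu) hb
    obtain ⟨a, ha⟩ := hcoker b' ⟨k, hk⟩
    have hua : p ^ k • u • a = 0 := by
      rw [smul_comm]
      exact hker _ (by rw [map_nsmul, ha, smul_comm, hk, smul_zero])
    exact ⟨⟨u • a, k, hua⟩, Subtype.ext <| by
      change ψ (u • a) = (u * u) • b'
      rw [map_zsmul, ha, mul_smul]⟩

lemma primaryComponent_le_torsion (hp : p ≠ 0) : primaryComponent A p ≤ torsion A := by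
  rintro a ⟨k, hk⟩
  exact isOfFinAddOrder_iff_nsmul_eq_zero.2 ⟨p ^ k, by positivity, hk⟩

lemma nonempty_primaryComponent_torsion_addEquiv (hp : p ≠ 0) :
    Nonempty (primaryComponent (torsion A) p ≃+ primaryComponent A p) :=
  nonempty_primaryComponent_addEquiv_of_isCoprime (torsion A).subtype isCoprime_one_left
    (fun a ha ↦ by rw [one_smul]; exact Subtype.ext ha)
    fun b hb ↦ ⟨⟨b, primaryComponent_le_torsion hp hb⟩, (one_smul ℤ b).symm⟩

lemma nonempty_primaryComponent_prod_int_addEquiv (hp : p ≠ 0)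
    (hA : ∀ a : A, a ∈ primaryComponent A p) :
    Nonempty (primaryComponent (A × ℤ) p ≃+ A) := by
  obtain ⟨e⟩ := nonempty_primaryComponent_addEquiv_of_isCoprime (AddMonoidHom.inl A ℤ)
    (p := p) isCoprime_one_left (fun a ha ↦ by rw [one_smul]; exact congrArg Prod.fst ha)
    fun ⟨a, z⟩ ⟨k, hk⟩ ↦ ⟨a, by
      have hz : p ^ k • z = 0 := congrArg Prod.snd hk
      rw [one_smul, (smul_eq_zero.1 hz).resolve_left (pow_ne_zero k hp)]
      rfl⟩
  rw [← AddSubgroup.eq_top_iff'] at hA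
  exact ⟨e.symm.trans ((AddEquiv.addSubgroupCongr hA).trans AddSubgroup.topEquiv)⟩

end PrimaryComponent

section IntCoker

open Submodule

variable {m n : Type*} [Fintype m] [Fintype n] {p : ℕ}

abbrev intCoker (M : Matrix n n ℤ) := (n → ℤ) ⧸ LinearMap.range M.mulVecLin

lemma intCoker_mk_eq_zero_iff {M : Matrix n n ℤ} {x : n → ℤ} :
    (Submodule.Quotient.mk x : intCoker M) = 0 ↔ ∃ y, M *ᵥ y = x :=
  Submodule.Quotient.mk_eq_zero _

lemma nonempty_primaryComponent_intCoker_smul_addEquiv (M : Matrix n n ℤ) {c : ℤ}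
    (hc : IsCoprime c p) :
    Nonempty (primaryComponent (intCoker (c • M)) p ≃+ primaryComponent (intCoker M) p) := by
  have hle : LinearMap.range (c • M).mulVecLin ≤ LinearMap.range M.mulVecLin := by
    rintro _ ⟨y, rfl⟩
    exact ⟨c • y, by rw [mulVecLin_apply, mulVecLin_apply, mulVec_smul, smul_mulVec]⟩
  refine nonempty_primaryComponent_addEquiv_of_isCoprime (factor hle).toAddMonoidHom hc ?_ ?_
  · rintro ⟨x⟩ hx
    obtain ⟨y, rfl⟩ := intCoker_mk_eq_zero_iff.1 hx
    exact intCoker_mk_eq_zero_iff.2 ⟨y, by rw [smul_mulVec]⟩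
  · rintro ⟨x⟩ -
    exact ⟨Submodule.Quotient.mk (c • x), rfl⟩

variable [DecidableEq m] [DecidableEq n]

lemma nonempty_primaryComponent_intCoker_add_mul_comm_addEquiv (N : Matrix m n ℤ)
    (C : Matrix n m ℤ) {u : ℤ} (hu : IsCoprime u p) :
    Nonempty (primaryComponent (intCoker (u • 1 + C * N)) p ≃+
      primaryComponent (intCoker (u • 1 + N * C)) p) := by
  have hNQ : N * (u • 1 + C * N) = (u • 1 + N * C) * N := by
    rw [Matrix.mul_add, Matrix.add_mul, Matrix.mul_smul, Matrix.smul_mul, Matrix.mul_one,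
      Matrix.one_mul, Matrix.mul_assoc]
  have hle : LinearMap.range (u • 1 + C * N).mulVecLin ≤
      (LinearMap.range (u • 1 + N * C).mulVecLin).comap N.mulVecLin := by
    rintro _ ⟨y, rfl⟩
    exact ⟨N *ᵥ y, by simp only [mulVecLin_apply, mulVec_mulVec, hNQ]⟩
  refine nonempty_primaryComponent_addEquiv_of_isCoprime (mapQ _ _ _ hle).toAddMonoidHom hu ?_ ?_
  · rintro ⟨x⟩ hx
    obtain ⟨v, hv⟩ := intCoker_mk_eq_zero_iff.1 hx
    have hNx : N *ᵥ x = u • v + N *ᵥ (C *ᵥ v) := by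
      rw [← mulVecLin_apply, ← hv, add_mulVec, smul_mulVec, one_mulVec, mulVec_mulVec]
    refine intCoker_mk_eq_zero_iff.2 ⟨x - C *ᵥ v, ?_⟩
    rw [add_mulVec, smul_mulVec, one_mulVec, ← mulVec_mulVec, mulVec_sub, hNx,
      add_sub_cancel_right, mulVec_smul, smul_sub, sub_add_cancel]
  · rintro ⟨v⟩ -
    refine ⟨Submodule.Quotient.mk (-(C *ᵥ v)), ?_⟩
    change Submodule.Quotient.mk (N *ᵥ -(C *ᵥ v)) = u • Submodule.Quotient.mk v
    rw [← Submodule.Quotient.mk_smul, ← sub_eq_zero, ← Submodule.Quotient.mk_sub,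
      intCoker_mk_eq_zero_iff]
    refine ⟨-v, ?_⟩
    rw [add_mulVec, smul_mulVec, one_mulVec, mulVec_neg, mulVec_neg, mulVec_mulVec]
    module

end IntCoker

section CompleteGraph

open SimpleGraph

variable {ι : Type*} [Fintype ι] [DecidableEq ι]

lemma lapMatrix_completeGraph_apply (i j : ι) :
    (completeGraph ι).lapMatrix ℤ i j = if i = j then (Fintype.card ι : ℤ) - 1 else -1 := by
  have : 1 ≤ Fintype.card ι := Fintype.card_pos_iff.2 ⟨i⟩
  by_cases h : i = j <;> simp [lapMatrix, degMatrix, h, this]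

lemma lapMatrix_completeGraph_mulVec (y : ι → ℤ) :
    (completeGraph ι).lapMatrix ℤ *ᵥ y = (Fintype.card ι : ℤ) • y - fun _ ↦ ∑ j, y j := by
  ext i
  rw [lapMatrix_mulVec_apply, complete_graph_degree, neighborFinset_eq_filter]
  simp only [top_adj, filter_ne, sum_erase_eq_sub (mem_univ i)]
  have : 1 ≤ Fintype.card ι := Fintype.card_pos_iff.2 ⟨i⟩
  push_cast [this]
  simp only [Pi.sub_apply, Pi.smul_apply, smul_eq_mul]
  ring

def finSuccReduce (k q : ℕ) : (Fin (k + 1) → ℤ) →+ (Fin k → ZMod q) × ℤ where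
  toFun x := (fun i ↦ (x i.succ : ZMod q), ∑ i, x i)
  map_zero' := by ext <;> simp
  map_add' x y := by ext <;> simp [sum_add_distrib]

lemma finSuccReduce_surjective (k q : ℕ) : Function.Surjective (finSuccReduce k q) := by
  rintro ⟨v, z⟩
  refine ⟨Fin.cons (z - ∑ i, ((v i).cast : ℤ)) fun i ↦ (v i).cast, ?_⟩
  ext i
  · simp [finSuccReduce]
  · simp [finSuccReduce, Fin.sum_univ_succ]

lemma dvd_of_finSuccReduce_eq_zero {k q : ℕ} {x : Fin (k + 1) → ℤ}
    (hx : finSuccReduce k q x = 0) (j : Fin (k + 1)) : (q : ℤ) ∣ x j := by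
  have hsucc (i : Fin k) : (q : ℤ) ∣ x i.succ :=
    (ZMod.intCast_zmod_eq_zero_iff_dvd _ _).1 (congrFun (congrArg Prod.fst hx) i)
  have hsum : ∑ i, x i = 0 := congrArg Prod.snd hx
  induction j using Fin.cases with
  | zero =>
    rw [Fin.sum_univ_succ, add_eq_zero_iff_eq_neg] at hsum
    exact hsum ▸ (dvd_sum fun i _ ↦ hsucc i).neg_right
  | succ i => exact hsucc i

lemma finSuccReduce_smul_lapMatrix_completeGraph_mulVec {k q : ℕ} {c : ℤ} (hc : (q : ℤ) ∣ c)
    (y : Fin (k + 1) → ℤ) :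
    finSuccReduce k q ((c • (completeGraph (Fin (k + 1))).lapMatrix ℤ) *ᵥ y) = 0 := by
  rw [smul_mulVec, lapMatrix_completeGraph_mulVec, Fintype.card_fin]
  ext i
  · simp [finSuccReduce, (ZMod.intCast_zmod_eq_zero_iff_dvd c q).2 hc]
  · change ∑ i, c * ((k + 1 : ℕ) * y i - ∑ j, y j) = 0
    rw [← mul_sum, sum_sub_distrib, ← mul_sum, sum_const, card_univ, Fintype.card_fin,
      nsmul_eq_mul, sub_self, mul_zero]

lemma exists_smul_lapMatrix_completeGraph_mulVec_eq {k q : ℕ} (hq : q ≠ 0) (s : ℤ)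
    {x : Fin (k + 1) → ℤ} (hx : finSuccReduce k q x = 0) :
    ∃ y, ((q * s : ℤ) • (completeGraph (Fin (k + 1))).lapMatrix ℤ) *ᵥ y =
      (s * (k + 1 : ℕ)) • x := by
  choose y hy using dvd_of_finSuccReduce_eq_zero hx
  have hsum : ∑ j, y j = 0 := by
    have hx' : ∑ j, x j = 0 := congrArg Prod.snd hx
    simp_rw [hy, ← mul_sum, mul_eq_zero] at hx'
    exact hx'.resolve_left (by exact_mod_cast hq)
  refine ⟨y, ?_⟩
  rw [smul_mulVec, lapMatrix_completeGraph_mulVec, Fintype.card_fin, hsum]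
  ext j
  simp only [hy, Pi.smul_apply, Pi.sub_apply, smul_eq_mul, sub_zero]
  ring

theorem nonempty_primaryComponent_intCoker_smul_lapMatrix_completeGraph_addEquiv {k a p : ℕ}
    (hp : p ≠ 0) {s : ℤ} (hs : IsCoprime (s * (k + 1 : ℕ)) p) :
    Nonempty (primaryComponent
      (intCoker ((p ^ a * s : ℤ) • (completeGraph (Fin (k + 1))).lapMatrix ℤ)) p ≃+
        (Fin k → ZMod (p ^ a))) := by
  have hpa : ((p ^ a : ℕ) : ℤ) = p ^ a := Nat.cast_pow p a
  have hle : LinearMap.range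
      ((p ^ a * s : ℤ) • (completeGraph (Fin (k + 1))).lapMatrix ℤ).mulVecLin ≤
        LinearMap.ker (finSuccReduce k (p ^ a)).toIntLinearMap := by
    rintro _ ⟨y, rfl⟩
    exact finSuccReduce_smul_lapMatrix_completeGraph_mulVec (hpa ▸ dvd_mul_right _ _) y
  obtain ⟨e⟩ := nonempty_primaryComponent_addEquiv_of_isCoprime
    (Submodule.liftQ _ _ hle).toAddMonoidHom hs
    (fun q hx ↦ by
      obtain ⟨x, rfl⟩ := Submodule.Quotient.mk_surjective _ q
      rw [← Submodule.Quotient.mk_smul, intCoker_mk_eq_zero_iff, ← hpa]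
      exact exists_smul_lapMatrix_completeGraph_mulVec_eq (pow_ne_zero a hp) s hx)
    fun b _ ↦ by
      obtain ⟨x, rfl⟩ := finSuccReduce_surjective k (p ^ a) b
      exact ⟨Submodule.Quotient.mk ((s * (k + 1 : ℕ)) • x), map_zsmul (finSuccReduce k _) _ x⟩
  obtain ⟨e'⟩ := nonempty_primaryComponent_prod_int_addEquiv (A := Fin k → ZMod (p ^ a)) hp
    fun v ↦ ⟨a, by ext; simp⟩
  exact ⟨e.trans e'⟩

end CompleteGraph

section KneserCounting

variable {n : ℕ}

lemma card_filter_kneserVertex (P : Finset (Fin n) → Prop) [DecidablePred P] :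
    #{S : KneserVertex n | P S.1} = #{s ∈ univ.powersetCard 2 | P s} := by
  rw [← card_map (Function.Embedding.subtype _)]
  congr 1
  ext s
  simp [and_comm]

lemma card_kneserVertex_mem (x : Fin n) : #{S : KneserVertex n | x ∈ S.1} = n - 1 := by
  rw [card_filter_kneserVertex (x ∈ ·)]
  simpa using card_filter_powersetCard_subset {x} univ 2 (subset_univ _) (by simp)

lemma card_kneserVertex_mem_mem {x y : Fin n} (hxy : x ≠ y) :
    #{S : KneserVertex n | x ∈ S.1 ∧ y ∈ S.1} = 1 := by
  have h := card_filter_powersetCard_subset {x, y} univ 2 (subset_univ _) (card_pair hxy).le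
  simp only [card_pair hxy, insert_subset_iff, singleton_subset_iff] at h
  rw [card_filter_kneserVertex fun s ↦ x ∈ s ∧ y ∈ s]
  simpa using h

lemma kneserGraph2_degree (S : KneserVertex n) : (kneserGraph2 n).degree S = (n - 2).choose 2 := by
  rw [← SimpleGraph.card_neighborFinset_eq_degree, SimpleGraph.neighborFinset_eq_filter]
  change #(univ.filter fun T : KneserVertex n ↦ Disjoint S.1 T.1) = _
  rw [card_filter_kneserVertex (Disjoint S.1)]
  have : {s ∈ (univ : Finset (Fin n)).powersetCard 2 | Disjoint S.1 s} =
      S.1ᶜ.powersetCard 2 := by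
    ext s
    simp [mem_powersetCard, subset_compl_iff_disjoint_left, and_comm]
  rw [this, card_powersetCard, card_compl, Fintype.card_fin, S.2]

lemma KneserVertex.eq_iff_card_inter {S T : KneserVertex n} : S = T ↔ #(S.1 ∩ T.1) = 2 := by
  constructor
  · rintro rfl
    rw [inter_self, S.2]
  · intro h
    have hS := eq_of_subset_of_card_le inter_subset_left (h.trans S.2.symm).ge
    have hT := eq_of_subset_of_card_le inter_subset_right (h.trans T.2.symm).ge
    exact Subtype.ext (hS.symm.trans hT)

end KneserCounting

section KneserIncidence

variable {n : ℕ}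

def kneserIncidence (n : ℕ) : Matrix (KneserVertex n) (Fin n) ℤ :=
  of fun S x ↦ if x ∈ S.1 then 1 else 0

def kneserSignedIncidence (n : ℕ) : Matrix (Fin n) (KneserVertex n) ℤ :=
  of fun x S ↦ if x ∈ S.1 then 1 else -1

lemma kneserIncidence_mul_kneserSignedIncidence_apply (S T : KneserVertex n) :
    (kneserIncidence n * kneserSignedIncidence n) S T = 2 * #(S.1 ∩ T.1) - 2 := by
  have h (x : Fin n) : kneserIncidence n S x * kneserSignedIncidence n x T =
      2 * (if x ∈ S.1 ∩ T.1 then 1 else 0) - (if x ∈ S.1 then 1 else 0) := by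
    simp only [kneserIncidence, kneserSignedIncidence, of_apply, mem_inter]
    split_ifs <;> simp_all
  rw [mul_apply, sum_congr rfl fun x _ ↦ h x, sum_sub_distrib, ← mul_sum, sum_boole, sum_boole,
    filter_mem_eq_inter, filter_mem_eq_inter, univ_inter, univ_inter, S.2, Nat.cast_ofNat]

lemma kneserSignedIncidence_mul_kneserIncidence_apply (x y : Fin n) :
    (kneserSignedIncidence n * kneserIncidence n) x y =
      2 * #{S : KneserVertex n | x ∈ S.1 ∧ y ∈ S.1} - #{S : KneserVertex n | y ∈ S.1} := by
  have h (S : KneserVertex n) : kneserSignedIncidence n x S * kneserIncidence n S y =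
      2 * (if x ∈ S.1 ∧ y ∈ S.1 then 1 else 0) - (if y ∈ S.1 then 1 else 0) := by
    simp only [kneserIncidence, kneserSignedIncidence, of_apply]
    split_ifs <;> simp_all
  rw [mul_apply, sum_congr rfl fun S _ ↦ h S, sum_sub_distrib, ← mul_sum, sum_boole, sum_boole]

theorem two_smul_kneserLaplacian :
    (2 : ℤ) • kneserLaplacian n =
      (((n : ℤ) - 1) * ((n : ℤ) - 4)) • 1 + kneserIncidence n * kneserSignedIncidence n := by
  ext S T
  have hn : 2 ≤ n := by simpa [S.2] using card_le_univ S.1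
  have hdeg : ((n - 2).choose 2 : ℤ) * 2 = ((n : ℤ) - 2) * ((n : ℤ) - 3) := by
    have := Nat.cast_choose_two ℚ (n - 2)
    push_cast [hn] at this
    qify
    linarith
  have hST : #(S.1 ∩ T.1) ≤ 2 := (card_le_card inter_subset_left).trans S.2.le
  have hadj : (kneserGraph2 n).Adj S T ↔ #(S.1 ∩ T.1) = 0 := by
    rw [card_eq_zero, ← disjoint_iff_inter_eq_empty]
    rfl
  simp only [kneserLaplacian, SimpleGraph.lapMatrix, SimpleGraph.degMatrix, Matrix.smul_apply,
    Matrix.sub_apply, Matrix.add_apply, diagonal_apply, one_apply, SimpleGraph.adjMatrix_apply,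
    kneserIncidence_mul_kneserSignedIncidence_apply, KneserVertex.eq_iff_card_inter, hadj,
    kneserGraph2_degree, smul_eq_mul]
  interval_cases #(S.1 ∩ T.1) <;> simp
  linarith

theorem smul_one_add_kneserSignedIncidence_mul_kneserIncidence :
    (((n : ℤ) - 1) * ((n : ℤ) - 4)) • 1 + kneserSignedIncidence n * kneserIncidence n =
      ((n : ℤ) - 3) • (SimpleGraph.completeGraph (Fin n)).lapMatrix ℤ := by
  ext x y
  have hn : 1 ≤ n := x.pos
  simp only [Matrix.add_apply, Matrix.smul_apply, one_apply, lapMatrix_completeGraph_apply,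
    Fintype.card_fin, kneserSignedIncidence_mul_kneserIncidence_apply, card_kneserVertex_mem,
    smul_eq_mul]
  split_ifs with hxy
  · subst hxy
    simp only [and_self, card_kneserVertex_mem]
    push_cast [hn]
    ring
  · rw [card_kneserVertex_mem_mem hxy]
    push_cast [hn]
    ring

end KneserIncidence

lemma isCoprime_of_not_dvd {p : ℕ} (hp : p.Prime) {u : ℤ} (h : ¬ (p : ℤ) ∣ u) :
    IsCoprime u p :=
  ((Nat.prime_iff_prime_int.mp hp).coprime_iff_not_dvd.mpr h).symm

lemma isCoprime_of_dvd_sub {p : ℕ} (hp : p.Prime) {x c : ℤ} (h : (p : ℤ) ∣ x - c) (hc0 : 0 < c)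
    (hcp : c < p) : IsCoprime x p :=
  isCoprime_of_not_dvd hp fun hx ↦ (Int.le_of_dvd hc0 (by simpa using dvd_sub hx h)).not_gt hcp

lemma exists_natCast_sub_eq_pow_mul {m c p a : ℕ} (hdvd : p ^ a ∣ m - c)
    (hndvd : ¬ p ^ (a + 1) ∣ m - c) : ∃ s : ℕ, (m : ℤ) - c = p ^ a * s ∧ ¬ (p : ℤ) ∣ s := by
  obtain ⟨s, hs⟩ := hdvd
  have hcm : c ≤ m := by
    by_contra h
    exact hndvd (by rw [Nat.sub_eq_zero_of_le (by omega)]; exact dvd_zero _)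
  refine ⟨s, by rw [← Nat.cast_sub hcm, hs]; push_cast; rfl, ?_⟩
  rw [Int.natCast_dvd_natCast]
  rintro ⟨t, rfl⟩
  exact hndvd ⟨t, by rw [hs, pow_succ, mul_assoc]⟩

theorem kneser_sylow_p_dvd_n_sub_three_general (n p a : ℕ) [Fact p.Prime] (hp : 3 < p)
    (ha : 1 ≤ a) (hdvd : p ^ a ∣ n - 3) (hndvd : ¬ p ^ (a + 1) ∣ n - 3) :
    Nonempty ((AddCommGroup.primaryComponent (criticalGroup n) p) ≃+
      (Fin (n - 1) → ZMod (p ^ a))) := by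
  have hpp : p.Prime := Fact.out
  obtain ⟨s, hsZ, hps⟩ := exists_natCast_sub_eq_pow_mul hdvd hndvd
  rw [Nat.cast_ofNat] at hsZ
  have hn : (3 : ℤ) ≤ n := sub_nonneg.1 (hsZ ▸ by positivity)
  have h3 : (p : ℤ) ∣ n - 3 := hsZ ▸ (dvd_pow_self _ (by omega)).mul_right _
  have h2 : IsCoprime (2 : ℤ) p := isCoprime_of_dvd_sub hpp (by simp) two_pos (by omega)
  have hu : IsCoprime (((n : ℤ) - 1) * ((n : ℤ) - 4)) p :=
    .mul_left (isCoprime_of_dvd_sub hpp (c := 2) (by convert h3 using 1; ring) two_pos (by omega))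
      (isCoprime_of_dvd_sub hpp (c := p - 1)
        (by rw [show (n : ℤ) - 4 - (p - 1) = n - 3 - p by ring]; exact h3.sub dvd_rfl)
        (by omega) (by omega))
  have hsn : IsCoprime ((s : ℤ) * n) p :=
    .mul_left (isCoprime_of_not_dvd hpp hps) (isCoprime_of_dvd_sub hpp h3 three_pos (by omega))
  obtain ⟨k, rfl⟩ : ∃ k, n = k + 1 := ⟨n - 1, by omega⟩
  obtain ⟨e₁⟩ := nonempty_primaryComponent_torsion_addEquiv (A := KneserCokernel (k + 1))
    hpp.ne_zero
  obtain ⟨e₂⟩ := nonempty_primaryComponent_intCoker_smul_addEquiv (kneserLaplacian (k + 1)) h2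
  obtain ⟨e₃⟩ := nonempty_primaryComponent_intCoker_add_mul_comm_addEquiv
    (kneserIncidence (k + 1)) (kneserSignedIncidence (k + 1)) hu
  obtain ⟨e₄⟩ := nonempty_primaryComponent_intCoker_smul_lapMatrix_completeGraph_addEquiv
    (a := a) hpp.ne_zero hsn
  rw [two_smul_kneserLaplacian] at e₂
  rw [smul_one_add_kneserSignedIncidence_mul_kneserIncidence, hsZ] at e₃
  exact ⟨e₁.trans (e₂.symm.trans (e₃.symm.trans e₄))⟩

theorem kneser_sylow_p_dvd_n_sub_three (n p a : ℕ) [Fact p.Prime] (hn : 5 ≤ n) (hp : 3 < p)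
    (ha : 1 ≤ a) (hdvd : p ^ a ∣ n - 3) (hndvd : ¬ p ^ (a + 1) ∣ n - 3) :
    Nonempty ((AddCommGroup.primaryComponent (criticalGroup n) p) ≃+
      (Fin (n - 1) → ZMod (p ^ a))) :=
  kneser_sylow_p_dvd_n_sub_three_general n p a hp ha hdvd hndvd
end

section
/- Let p be a prime, let X be a free module of finite rank over the p-adic integers ℤ_p, and let φ be a ℤ_p-module endomorphism of X. Let φ̃ denote the induced endomorphism of ℚ_p ⊗_{ℤ_p} X. Suppose φ̃ has an eigenvalue u ∈ ℤ whose eigenspace V_u in ℚ_p ⊗ X has dimension b over ℚ_p, and suppose p^a divides u. Let M_a = {x ∈ X : φ(x) ∈ p^a X}. Then the image of M_a in X/pX has dimension at least b as a vector space over the field ℤ/pℤ. -/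
/-!
The lattice `N = {x ∈ X | 1 ⊗ x ∈ V_u}` is saturated in `X` (if `p • y ∈ N` then `y ∈ N`) and
spans `V_u` over `ℚ_p`, so it is free of rank `b`. As `X` is torsion-free, `φ` acts on `N` as
multiplication by `u`, hence `N ⊆ M_a`; saturation keeps a basis of `N` independent modulo `p`.
-/

open scoped TensorProduct nonZeroDivisors
open Module

namespace Submodule

variable {R K M N : Type*} [CommRing R] [CommRing K] [Algebra R K]
  [AddCommGroup M] [Module R M] [AddCommGroup N] [Module R N] [Module K N] [IsScalarTower R K N]

theorem finrank_comap_restrictScalars_of_isLocalizedModule [IsFractionRing R K]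
    (f : M →ₗ[R] N) [IsLocalizedModule R⁰ f] (E : Submodule K N) :
    finrank R ((E.restrictScalars R).comap f) = finrank K E := by
  set L := (E.restrictScalars R).comap f
  have hL : L.localized' K R⁰ f = E := (localized'gi K R⁰ f).l_u_eq E
  calc finrank R L = finrank R (L.localized' K R⁰ f) :=
        (IsLocalizedModule.finrank_eq R⁰ (L.toLocalized' K R⁰ f) le_rfl).symm
    _ = finrank K E := by rw [IsLocalization.finrank_eq K R⁰ le_rfl, hL]

theorem smul_mem_comap_restrictScalars_iff (f : M →ₗ[R] N) (E : Submodule K N) {r : R}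
    (hr : IsUnit (algebraMap R K r)) {x : M} :
    r • x ∈ (E.restrictScalars R).comap f ↔ x ∈ (E.restrictScalars R).comap f := by
  simp only [mem_comap, restrictScalars_mem, map_smul, ← algebraMap_smul K r,
    smul_mem_iff_of_isUnit E hr]

end Submodule

theorem LinearMap.apply_eq_smul_of_one_tmul_mem_eigenspace_baseChange {R K M : Type*}
    [CommRing R] [CommRing K] [Algebra R K] [AddCommGroup M] [Module R M] {φ : M →ₗ[R] M}
    (hinj : Function.Injective (TensorProduct.mk R K M 1)) {r : R} {x : M}
    (hx : (1 : K) ⊗ₜ[R] x ∈ Module.End.eigenspace (φ.baseChange K) (algebraMap R K r)) :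
    φ x = r • x := by
  apply hinj
  rw [Module.End.mem_eigenspace_iff, baseChange_tmul, algebraMap_smul] at hx
  simpa [← TensorProduct.tmul_smul] using hx

theorem Module.Basis.dvd_coeff_of_sum_eq_smul {R M ι : Type*} [CommRing R] [AddCommGroup M]
    [Module R M] [Fintype ι] {N : Submodule R M} (v : Basis ι R N) {π : R}
    (hN : ∀ y : M, π • y ∈ N → y ∈ N) {c : ι → R} {y : M}
    (h : ∑ i, c i • (v i : M) = π • y) (i : ι) : π ∣ c i := by
  have hy : y ∈ N := hN y (h ▸ N.sum_mem fun j _ => N.smul_mem (c j) (v j).2)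
  have hsum : ∑ j, c j • v j = π • (⟨y, hy⟩ : N) := Subtype.ext (by simpa using h)
  refine ⟨v.repr ⟨y, hy⟩ i, ?_⟩
  have hi := congr(v.repr $hsum i)
  rwa [map_smul, Finsupp.smul_apply, smul_eq_mul, v.repr_sum_self] at hi

theorem eigenspace_lower_bound_mod_p_general (p : ℕ) [Fact p.Prime]
    (X : Type*) [AddCommGroup X] [Module ℤ_[p] X]
    [Module.Free ℤ_[p] X] [Module.Finite ℤ_[p] X]
    (φ : X →ₗ[ℤ_[p]] X) (u : ℤ) (a b : ℕ)
    (hu : (p : ℤ) ^ a ∣ u)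
    (hb : Module.finrank ℚ_[p]
      (Module.End.eigenspace (LinearMap.baseChange ℚ_[p] φ) ((u : ℚ_[p]))) = b) :
    ∃ x : Fin b → X,
      (∀ i, ∃ y : X, φ (x i) = ((p : ℤ_[p]) ^ a) • y) ∧
      (∀ c : Fin b → ℤ_[p], (∃ y : X, (∑ i, c i • x i) = (p : ℤ_[p]) • y) →
        ∀ i, (p : ℤ_[p]) ∣ c i) := by
  set E := Module.End.eigenspace (φ.baseChange ℚ_[p]) (u : ℚ_[p])
  set N := (E.restrictScalars ℤ_[p]).comap (TensorProduct.mk ℤ_[p] ℚ_[p] X 1)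
  have hrank : finrank ℤ_[p] N = b :=
    hb ▸ Submodule.finrank_comap_restrictScalars_of_isLocalizedModule _ E
  let v : Basis (Fin b) ℤ_[p] N := (Module.finBasis ℤ_[p] N).reindex (finCongr hrank)
  have hp : IsUnit (algebraMap ℤ_[p] ℚ_[p] p) := by
    simpa using (Fact.out : p.Prime).ne_zero
  have hsat (y : X) : (p : ℤ_[p]) • y ∈ N → y ∈ N :=
    (Submodule.smul_mem_comap_restrictScalars_iff _ E hp).mp
  refine ⟨fun i => v i, fun i => ?_, fun c ⟨y, hy⟩ => v.dvd_coeff_of_sum_eq_smul hsat hy⟩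
  obtain ⟨m, rfl⟩ := hu
  have hv : φ (v i) = ((p ^ a * m : ℤ) : ℤ_[p]) • (v i : X) :=
    LinearMap.apply_eq_smul_of_one_tmul_mem_eigenspace_baseChange
      (Module.Flat.tensorProduct_mk_injective ℤ_[p] X ℚ_[p])
      (by rw [map_intCast]; exact (v i).2)
  exact ⟨(m : ℤ_[p]) • (v i : X), by rw [hv, smul_smul]; push_cast; rfl⟩

theorem eigenspace_lower_bound_mod_p (p : ℕ) [Fact p.Prime]
    (X : Type*) [AddCommGroup X] [Module ℤ_[p] X]
    [Module.Free ℤ_[p] X] [Module.Finite ℤ_[p] X]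
    (φ : X →ₗ[ℤ_[p]] X) (u : ℤ) (a b : ℕ)
    (hu : (p : ℤ) ^ a ∣ u)
    (heig : Module.End.HasEigenvalue (LinearMap.baseChange ℚ_[p] φ) ((u : ℚ_[p])))
    (hb : Module.finrank ℚ_[p]
      (Module.End.eigenspace (LinearMap.baseChange ℚ_[p] φ) ((u : ℚ_[p]))) = b) :
    ∃ x : Fin b → X,
      (∀ i, ∃ y : X, φ (x i) = ((p : ℤ_[p]) ^ a) • y) ∧
      (∀ c : Fin b → ℤ_[p], (∃ y : X, (∑ i, c i • x i) = (p : ℤ_[p]) • y) →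
        ∀ i, (p : ℤ_[p]) ∣ c i) :=
  eigenspace_lower_bound_mod_p_general p X φ u a b hu hb
end
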